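/- arXiv:cs/0211001 — 4 statements merged into one kernel-verified Lean document; each statement's English description precedes it below -/
import Mathlib

section
/- For all i, j with 1 ≤ i ≤ m and 1 ≤ j ≤ n, if a_i = b_j then L(i,j) = L(i-1,j-1) + 1. -/
/-- `s` is a common subsequence of `A` and `B`. -/
def IsCommonSubseq {α : Type*} (A B s : List α) : Prop :=
  s.Sublist A ∧ s.Sublist B

/-- `lcsL A B i j` is the maximum length of a common subsequence of the
length-`i` prefix of `A` and the length-`j` prefix of `B`. -/
noncomputable def lcsL {α : Type*} (A B : List α) (i j : ℕ) : ℕ :=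
  sSup {k | ∃ s : List α, IsCommonSubseq (A.take i) (B.take j) s ∧ s.length = k}

/-- `s` is a longest common subsequence of the length-`i` prefix of `A` and
the length-`j` prefix of `B`. -/
def IsLCS {α : Type*} (A B : List α) (i j : ℕ) (s : List α) : Prop :=
  IsCommonSubseq (A.take i) (B.take j) s ∧ s.length = lcsL A B i j

/-- The (1-indexed) pair `(i, j)` is a match: `a_i = b_j`. -/
def IsMatch {α : Type*} (A B : List α) (i j : ℕ) : Prop :=
  1 ≤ i ∧ i ≤ A.length ∧ 1 ≤ j ∧ j ≤ B.length ∧ A[i - 1]? = B[j - 1]?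

/-- `e` is an embedding of the list `s` in the pair of prefixes `(A_i, B_j)`:
a sequence of (1-indexed) position pairs, strictly increasing in both
coordinates, lying in `[1..i] × [1..j]`, such that the `t`-th pair points at
occurrences of the `t`-th character of `s` in both strings. -/
def IsEmbedding {α : Type*} (A B : List α) (i j : ℕ) (s : List α)
    (e : List (ℕ × ℕ)) : Prop :=
  e.Chain' (fun u v => u.1 < v.1 ∧ u.2 < v.2) ∧
  (∀ u ∈ e, 1 ≤ u.1 ∧ u.1 ≤ i ∧ 1 ≤ u.2 ∧ u.2 ≤ j) ∧
  List.Forall₂ (fun (u : ℕ × ℕ) (c : α) =>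
    A[u.1 - 1]? = some c ∧ B[u.2 - 1]? = some c) e s

/-- The match `(i, j)` is antidominant of rank `r` within the rectangle
`[1..I] × [1..J]`. -/
def IsAntidominant {α : Type*} (A B : List α) (r I J i j : ℕ) : Prop :=
  IsMatch A B i j ∧ i ≤ I ∧ j ≤ J ∧ lcsL A B i j = r ∧
  ¬ ∃ i' j', IsMatch A B i' j' ∧ lcsL A B i' j' = r ∧
    ((i' = i ∧ j < j' ∧ j' ≤ J) ∨ (j' = j ∧ i < i' ∧ i' ≤ I))

/-- `e` is an antidominant backtrace for `(i, j)`: a sequence of matches of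
length `L(i,j)`, strictly increasing in both coordinates, such that (setting
the `(k+1)`-st entry to `(i+1, j+1)`) the `t`-th match is antidominant of rank
`t` within the rectangle determined by the `(t+1)`-st entry minus one. -/
def IsAntidominantBacktrace {α : Type*} (A B : List α) (i j : ℕ)
    (e : List (ℕ × ℕ)) : Prop :=
  e.length = lcsL A B i j ∧
  e.Chain' (fun u v => u.1 < v.1 ∧ u.2 < v.2) ∧
  ∀ t < e.length,
    IsAntidominant A B (t + 1)
      (((e ++ [(i + 1, j + 1)]).getD (t + 1) (0, 0)).1 - 1)
      (((e ++ [(i + 1, j + 1)]).getD (t + 1) (0, 0)).2 - 1)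
      (e.getD t (0, 0)).1 (e.getD t (0, 0)).2


namespace LCSAux

open List

variable {α : Type*} (A B : List α)

def S (i j : ℕ) : Set ℕ :=
  {k | ∃ s : List α, IsCommonSubseq (A.take i) (B.take j) s ∧ s.length = k}

lemma S_nonempty (i j : ℕ) : (S A B i j).Nonempty :=
  ⟨0, [], ⟨List.nil_sublist _, List.nil_sublist _⟩, rfl⟩

lemma S_bdd (i j : ℕ) : BddAbove (S A B i j) := by
  refine ⟨(A.take i).length, fun k hk => ?_⟩
  obtain ⟨s, ⟨hs, _⟩, rfl⟩ := hk
  exact hs.length_le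

lemma le_lcsL {i j : ℕ} {s : List α}
    (h : IsCommonSubseq (A.take i) (B.take j) s) : s.length ≤ lcsL A B i j :=
  le_csSup (S_bdd A B i j) ⟨s, h, rfl⟩

lemma lcsL_spec (i j : ℕ) :
    ∃ s : List α, IsCommonSubseq (A.take i) (B.take j) s ∧ s.length = lcsL A B i j :=
  Nat.sSup_mem (S_nonempty A B i j) (S_bdd A B i j)

lemma lcsL_le {i j k : ℕ}
    (h : ∀ s : List α, IsCommonSubseq (A.take i) (B.take j) s → s.length ≤ k) :
    lcsL A B i j ≤ k := by
  refine csSup_le (S_nonempty A B i j) ?_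
  rintro x ⟨s, hs, rfl⟩
  exact h s hs

lemma sublist_concat {s l : List α} {c : α} (h : s <+ l ++ [c]) :
    s <+ l ∨ ∃ s', s = s' ++ [c] ∧ s' <+ l := by
  rw [List.sublist_append_iff] at h
  obtain ⟨s₁, s₂, rfl, h₁, h₂⟩ := h
  rcases List.sublist_singleton.mp h₂ with rfl | rfl
  · exact Or.inl (by simpa using h₁)
  · exact Or.inr ⟨s₁, rfl, h₁⟩

end LCSAux

theorem stmt_0 {α : Type*} [DecidableEq α] (A B : List α) (m n : ℕ)
    (hA : A.length = m) (hB : B.length = n) (i j : ℕ)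
    (hi1 : 1 ≤ i) (him : i ≤ m) (hj1 : 1 ≤ j) (hjn : j ≤ n)
    (hab : A[i - 1]? = B[j - 1]?) :
    lcsL A B i j = lcsL A B (i - 1) (j - 1) + 1 := by
  have hiA : i - 1 < A.length := by omega
  have hjB : j - 1 < B.length := by omega
  set c := A[i - 1]'hiA with hc
  have hgetA : A[i - 1]? = some c := List.getElem?_eq_getElem hiA
  have hgetB : B[j - 1]? = some c := by rw [← hab]; exact hgetA
  have htakeA : A.take i = A.take (i - 1) ++ [c] := by
    have : i = (i - 1) + 1 := by omega
    rw [this, List.take_succ, List.getElem?_eq_getElem hiA]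
    rfl
  have htakeB : B.take j = B.take (j - 1) ++ [c] := by
    have : j = (j - 1) + 1 := by omega
    rw [this, List.take_succ, hgetB]
    rfl
  apply le_antisymm
  · apply LCSAux.lcsL_le
    rintro s ⟨hsA, hsB⟩
    rw [htakeA] at hsA
    rw [htakeB] at hsB
    rcases LCSAux.sublist_concat hsA with hA' | ⟨s', rfl, hs'A⟩
    · rcases LCSAux.sublist_concat hsB with hB' | ⟨s'', rfl, hs''B⟩
      · have := LCSAux.le_lcsL A B ⟨hA', hB'⟩
        omega
      · have hs''A : s''.Sublist (A.take (i - 1)) :=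
          ((List.sublist_append_left s'' [c]).trans hA')
        have := LCSAux.le_lcsL A B ⟨hs''A, hs''B⟩
        simp only [List.length_append, List.length_singleton]
        omega
    · have hs'B : s'.Sublist (B.take (j - 1)) := by
        rcases LCSAux.sublist_concat hsB with hB' | ⟨s'', heq, hs''B⟩
        · exact (List.sublist_append_left s' [c]).trans hB'
        · have : s' = s'' := by
            have := List.append_cancel_right heq
            exact this
          rw [this]; exact hs''B
      have := LCSAux.le_lcsL A B ⟨hs'A, hs'B⟩
      simp only [List.length_append, List.length_singleton]
      omega
  · obtain ⟨s, ⟨hsA, hsB⟩, hlen⟩ := LCSAux.lcsL_spec A B (i - 1) (j - 1)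
    have : IsCommonSubseq (A.take i) (B.take j) (s ++ [c]) := by
      constructor
      · rw [htakeA]; exact hsA.append (List.Sublist.refl _)
      · rw [htakeB]; exact hsB.append (List.Sublist.refl _)
    have h := LCSAux.le_lcsL A B this
    simp only [List.length_append, List.length_singleton, hlen] at h
    exact h
end

section
/- For all i, j with 1 ≤ i ≤ m and 1 ≤ j ≤ n such that a_i = b_j: every LCS of A_i and B_j ends with the character a_i; moreover, a list s is an LCS of A_i and B_j if and only if s = s' ++ [a_i] for some LCS s' of A_{i-1} and B_{j-1}. -/
/-! If `a_i = b_j = c`, a common subsequence of `A_i` and `B_j` that does not end with `c` is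
already a common subsequence of `A_{i-1}` and `B_{j-1}`, so appending `c` lengthens it; hence
every LCS ends with `c`. Removing that `c` leaves a common subsequence of `A_{i-1}` and
`B_{j-1}`, which gives `L(i,j) = L(i-1,j-1) + 1`, and both directions of the characterisation
follow by comparing lengths. -/

theorem List.Sublist.of_append_singleton {α : Type*} {s t : List α} {c : α}
    (h : s.Sublist (t ++ [c])) (hs : s.getLast? ≠ some c) : s.Sublist t := by
  obtain ⟨s₁, s₂, rfl, h₁, h₂⟩ := List.sublist_append_iff.1 h
  rcases List.sublist_singleton.1 h₂ with rfl | rfl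
  · simpa using h₁
  · simp at hs

namespace IsCommonSubseq

variable {α : Type*} {X Y s : List α} {c : α}

theorem append_singleton (h : IsCommonSubseq X Y s) (c : α) :
    IsCommonSubseq (X ++ [c]) (Y ++ [c]) (s ++ [c]) :=
  ⟨(List.append_sublist_append_right _).2 h.1, (List.append_sublist_append_right _).2 h.2⟩

theorem of_append_singleton (h : IsCommonSubseq (X ++ [c]) (Y ++ [c]) (s ++ [c])) :
    IsCommonSubseq X Y s :=
  ⟨(List.append_sublist_append_right _).1 h.1, (List.append_sublist_append_right _).1 h.2⟩

theorem of_append_singleton_of_getLast?_ne (h : IsCommonSubseq (X ++ [c]) (Y ++ [c]) s)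
    (hs : s.getLast? ≠ some c) : IsCommonSubseq X Y s :=
  ⟨h.1.of_append_singleton hs, h.2.of_append_singleton hs⟩

end IsCommonSubseq

section LCS

variable {α : Type*} {A B s : List α} {i j : ℕ} {c : α}

theorem bddAbove_commonSubseq_lengths (A B : List α) (i j : ℕ) :
    BddAbove {k | ∃ s : List α, IsCommonSubseq (A.take i) (B.take j) s ∧ s.length = k} := by
  refine ⟨(A.take i).length, ?_⟩
  rintro _ ⟨s, hs, rfl⟩
  exact hs.1.length_le

theorem IsCommonSubseq.length_le_lcsL (h : IsCommonSubseq (A.take i) (B.take j) s) :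
    s.length ≤ lcsL A B i j :=
  le_csSup (bddAbove_commonSubseq_lengths A B i j) ⟨s, h, rfl⟩

theorem exists_isLCS (A B : List α) (i j : ℕ) : ∃ s, IsLCS A B i j s := by
  have hne : {k | ∃ s : List α, IsCommonSubseq (A.take i) (B.take j) s ∧ s.length = k}.Nonempty :=
    ⟨0, [], ⟨List.nil_sublist _, List.nil_sublist _⟩, rfl⟩
  obtain ⟨s, hs, hlen⟩ := Nat.sSup_mem hne (bddAbove_commonSubseq_lengths A B i j)
  exact ⟨s, hs, hlen⟩

theorem List.take_add_one_of_getElem?_eq_some {l : List α} (h : l[i]? = some c) :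
    l.take (i + 1) = l.take i ++ [c] := by
  rw [List.take_add_one, h, Option.toList_some]

theorem isCommonSubseq_take_add_one_iff (hA : A[i]? = some c) (hB : B[j]? = some c) :
    IsCommonSubseq (A.take (i + 1)) (B.take (j + 1)) s ↔
      IsCommonSubseq (A.take i ++ [c]) (B.take j ++ [c]) s := by
  rw [List.take_add_one_of_getElem?_eq_some hA, List.take_add_one_of_getElem?_eq_some hB]

theorem IsLCS.getLast?_eq_of_match (hA : A[i]? = some c) (hB : B[j]? = some c)
    (hs : IsLCS A B (i + 1) (j + 1) s) : s.getLast? = some c := by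
  by_contra hne
  have hcs := (isCommonSubseq_take_add_one_iff hA hB).1 hs.1
  have hlonger : IsCommonSubseq (A.take (i + 1)) (B.take (j + 1)) (s ++ [c]) :=
    (isCommonSubseq_take_add_one_iff hA hB).2
      ((hcs.of_append_singleton_of_getLast?_ne hne).append_singleton c)
  have := hlonger.length_le_lcsL
  simp [hs.2] at this

theorem IsLCS.exists_eq_append_of_match (hA : A[i]? = some c) (hB : B[j]? = some c)
    (hs : IsLCS A B (i + 1) (j + 1) s) :
    ∃ s', IsCommonSubseq (A.take i) (B.take j) s' ∧ s = s' ++ [c] := by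
  obtain ⟨s', rfl⟩ := List.getLast?_eq_some_iff.1 (hs.getLast?_eq_of_match hA hB)
  exact ⟨s', ((isCommonSubseq_take_add_one_iff hA hB).1 hs.1).of_append_singleton, rfl⟩

theorem lcsL_add_one_add_one_of_match (hA : A[i]? = some c) (hB : B[j]? = some c) :
    lcsL A B (i + 1) (j + 1) = lcsL A B i j + 1 := by
  obtain ⟨t, ht⟩ := exists_isLCS A B i j
  obtain ⟨s, hs⟩ := exists_isLCS A B (i + 1) (j + 1)
  obtain ⟨s', hs', rfl⟩ := hs.exists_eq_append_of_match hA hB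
  have hle : lcsL A B (i + 1) (j + 1) ≤ lcsL A B i j + 1 := by
    rw [← hs.2, List.length_append, List.length_singleton]
    exact Nat.add_le_add_right hs'.length_le_lcsL 1
  have hge : lcsL A B i j + 1 ≤ lcsL A B (i + 1) (j + 1) := by
    simpa [ht.2] using ((isCommonSubseq_take_add_one_iff hA hB).2
      (ht.1.append_singleton c)).length_le_lcsL
  omega

theorem isLCS_add_one_add_one_iff_of_match (hA : A[i]? = some c) (hB : B[j]? = some c) :
    IsLCS A B (i + 1) (j + 1) s ↔ ∃ s', IsLCS A B i j s' ∧ s = s' ++ [c] := by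
  have hL := lcsL_add_one_add_one_of_match hA hB
  constructor
  · intro hs
    obtain ⟨s', hs', rfl⟩ := hs.exists_eq_append_of_match hA hB
    have hlen := hs.2
    rw [hL, List.length_append, List.length_singleton] at hlen
    exact ⟨s', ⟨hs', by omega⟩, rfl⟩
  · rintro ⟨s', hs', rfl⟩
    refine ⟨(isCommonSubseq_take_add_one_iff hA hB).2 (hs'.1.append_singleton c), ?_⟩
    rw [hL, List.length_append, List.length_singleton, hs'.2]

end LCS

theorem stmt_3_general {α : Type*} (A B : List α) (m : ℕ)
    (hA : A.length = m) (i j : ℕ)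
    (hi1 : 1 ≤ i) (him : i ≤ m) (hj1 : 1 ≤ j)
    (hab : A[i - 1]? = B[j - 1]?) :
    (∀ s : List α, IsLCS A B i j s → s.getLast? = A[i - 1]?) ∧
    (∀ s : List α, IsLCS A B i j s ↔
      ∃ (s' : List α) (c : α), IsLCS A B (i - 1) (j - 1) s' ∧
        A[i - 1]? = some c ∧ s = s' ++ [c]) := by
  obtain ⟨k, rfl⟩ := Nat.exists_eq_add_of_le' hi1
  obtain ⟨l, rfl⟩ := Nat.exists_eq_add_of_le' hj1
  simp only [Nat.add_sub_cancel] at hab ⊢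
  obtain ⟨c, hc⟩ : ∃ c, A[k]? = some c := ⟨A[k], List.getElem?_eq_getElem (by omega)⟩
  have hcB : B[l]? = some c := hab ▸ hc
  refine ⟨fun s hs => hc ▸ hs.getLast?_eq_of_match hc hcB, fun s => ?_⟩
  rw [isLCS_add_one_add_one_iff_of_match hc hcB]
  simp [hc]

theorem stmt_3 {α : Type*} [DecidableEq α] (A B : List α) (m n : ℕ)
    (hA : A.length = m) (hB : B.length = n) (i j : ℕ)
    (hi1 : 1 ≤ i) (him : i ≤ m) (hj1 : 1 ≤ j) (hjn : j ≤ n)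
    (hab : A[i - 1]? = B[j - 1]?) :
    (∀ s : List α, IsLCS A B i j s → s.getLast? = A[i - 1]?) ∧
    (∀ s : List α, IsLCS A B i j s ↔
      ∃ (s' : List α) (c : α), IsLCS A B (i - 1) (j - 1) s' ∧
        A[i - 1]? = some c ∧ s = s' ++ [c]) :=
  stmt_3_general A B m hA i j hi1 him hj1 hab
end

section
/- If (i,j) and (i',j') are matches of the same rank (L(i,j) = L(i',j')) with i < i', then j' ≤ j; that is, the matches of a fixed rank form an antichain (a contour) proceeding monotonically in both dimensions. -/
lemma lcs_set_nonempty {α : Type*} (A B : List α) (i j : ℕ) :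
    {k | ∃ s : List α, IsCommonSubseq (A.take i) (B.take j) s ∧ s.length = k}.Nonempty :=
  ⟨0, [], ⟨List.nil_sublist _, List.nil_sublist _⟩, rfl⟩

lemma lcs_set_bdd {α : Type*} (A B : List α) (i j : ℕ) :
    BddAbove {k | ∃ s : List α, IsCommonSubseq (A.take i) (B.take j) s ∧ s.length = k} := by
  refine ⟨(A.take i).length, ?_⟩
  rintro k ⟨s, ⟨hs, _⟩, rfl⟩
  exact hs.length_le

lemma exists_lcs {α : Type*} (A B : List α) (i j : ℕ) :
    ∃ s : List α, IsCommonSubseq (A.take i) (B.take j) s ∧ s.length = lcsL A B i j :=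
  Nat.sSup_mem (lcs_set_nonempty A B i j) (lcs_set_bdd A B i j)

lemma lcsL_mono {α : Type*} (A B : List α) {i j i' j' : ℕ} (hi : i ≤ i') (hj : j ≤ j') :
    lcsL A B i j ≤ lcsL A B i' j' := by
  apply csSup_le_csSup (lcs_set_bdd A B i' j') (lcs_set_nonempty A B i j)
  rintro k ⟨s, ⟨hsA, hsB⟩, rfl⟩
  have hAA : (A.take i).Sublist (A.take i') := by
    have := (A.take i').take_sublist i
    rwa [List.take_take, Nat.min_eq_left hi] at this
  have hBB : (B.take j).Sublist (B.take j') := by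
    have := (B.take j').take_sublist j
    rwa [List.take_take, Nat.min_eq_left hj] at this
  exact ⟨s, ⟨hsA.trans hAA, hsB.trans hBB⟩, rfl⟩

lemma lcsL_match_succ {α : Type*} (A B : List α) {i j : ℕ} (h : IsMatch A B i j) :
    lcsL A B (i - 1) (j - 1) + 1 ≤ lcsL A B i j := by
  obtain ⟨hi1, him, hj1, hjn, heq⟩ := h
  obtain ⟨s, ⟨hsA, hsB⟩, hlen⟩ := exists_lcs A B (i - 1) (j - 1)
  have hiA : i - 1 < A.length := by omega
  have hjB : j - 1 < B.length := by omega
  set c := A[i - 1] with hcdef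
  have hc : A[i - 1]? = some c := List.getElem?_eq_getElem hiA
  have hcB : B[j - 1]? = some c := by rw [← heq]; exact hc
  have hA' : A.take i = A.take (i - 1) ++ [c] := by
    have hieq : i = (i - 1) + 1 := by omega
    rw [hieq, List.take_succ, hc]; rfl
  have hB' : B.take j = B.take (j - 1) ++ [c] := by
    have hjeq : j = (j - 1) + 1 := by omega
    rw [hjeq, List.take_succ, hcB]; rfl
  apply le_csSup (lcs_set_bdd A B i j)
  refine ⟨s ++ [c], ⟨?_, ?_⟩, by simp [hlen]⟩
  · rw [hA']; exact hsA.append (List.Sublist.refl _)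
  · rw [hB']; exact hsB.append (List.Sublist.refl _)

theorem stmt_8 {α : Type*} [DecidableEq α] (A B : List α) (m n : ℕ)
    (hA : A.length = m) (hB : B.length = n) (i j i' j' : ℕ)
    (h1 : IsMatch A B i j) (h2 : IsMatch A B i' j')
    (hrank : lcsL A B i j = lcsL A B i' j') (hlt : i < i') :
    j' ≤ j := by
  by_contra h
  push_neg at h
  obtain ⟨hi1, him, hj1, hjn, _⟩ := h1
  have hstep := lcsL_match_succ A B h2
  have hmono : lcsL A B i j ≤ lcsL A B (i' - 1) (j' - 1) :=
    lcsL_mono A B (by omega) (by omega)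
  omega
end

section
/- (Replacement lemma.) Let ĩ ≤ m, j̃ ≤ n, and let (p_1,q_1), ..., (p_k,q_k) be an embedding of a list s in (A_ĩ, B_j̃). (Row version) If (p_k, j') is a match with q_k < j' ≤ j̃, then b_{j'} = b_{q_k} and (p_1,q_1), ..., (p_{k-1},q_{k-1}), (p_k, j') is also an embedding of the same list s in (A_ĩ, B_j̃). (Column version) If (i', q_k) is a match with p_k < i' ≤ ĩ, then a_{i'} = a_{p_k} and (p_1,q_1), ..., (p_{k-1},q_{k-1}), (i', q_k) is also an embedding of the same list s in (A_ĩ, B_j̃). -/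
private lemma forall2_last {α : Type*} {R : (ℕ × ℕ) → α → Prop} :
    ∀ {l : List (ℕ × ℕ)} {u : ℕ × ℕ} {s : List α},
      List.Forall₂ R (l ++ [u]) s → ∃ c, R u c
  | [], u, s, h => by
      cases h with
      | cons ha hs => exact ⟨_, ha⟩
  | a :: l, u, s, h => by
      cases h with
      | cons ha hs => exact forall2_last hs

private lemma forall2_replace_last {α : Type*} {R : (ℕ × ℕ) → α → Prop} {v : ℕ × ℕ} :
    ∀ {l : List (ℕ × ℕ)} {u : ℕ × ℕ} {s : List α},
      List.Forall₂ R (l ++ [u]) s → (∀ c, R u c → R v c) →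
      List.Forall₂ R (l ++ [v]) s
  | [], u, s, h, hr => by
      cases h with
      | cons ha hs => cases hs; exact .cons (hr _ ha) .nil
  | a :: l, u, s, h, hr => by
      cases h with
      | cons ha hs => exact .cons ha (forall2_replace_last hs hr)

private lemma emb_replace {α : Type*} (A B : List α) (i j : ℕ) (s : List α)
    (e' : List (ℕ × ℕ)) (p q p' q' : ℕ)
    (he : IsEmbedding A B i j s (e' ++ [(p, q)]))
    (hp : p ≤ p') (hq : q ≤ q') (hpi : p' ≤ i) (hqj : q' ≤ j)
    (hAe : A[p' - 1]? = A[p - 1]?) (hBe : B[q' - 1]? = B[q - 1]?) :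
    IsEmbedding A B i j s (e' ++ [(p', q')]) := by
  obtain ⟨hc, hb, hf⟩ := he
  have hmem : (p, q) ∈ e' ++ [(p, q)] := List.mem_append_right _ (by simp)
  have hbpq := hb _ hmem
  refine ⟨?_, ?_, ?_⟩
  · unfold List.Chain' at hc ⊢
    rw [List.isChain_append] at hc ⊢
    refine ⟨hc.1, List.isChain_singleton _, ?_⟩
    intro x hx y hy
    have := hc.2.2 x hx (p, q) (by simp)
    simp only [List.head?_cons, Option.mem_def, Option.some.injEq] at hy
    subst hy
    exact ⟨lt_of_lt_of_le this.1 hp, lt_of_lt_of_le this.2 hq⟩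
  · intro u hu
    rcases List.mem_append.1 hu with h | h
    · exact hb u (List.mem_append_left _ h)
    · simp only [List.mem_singleton] at h
      subst h
      exact ⟨le_trans hbpq.1 hp, hpi, le_trans hbpq.2.2.1 hq, hqj⟩
  · refine forall2_replace_last hf ?_
    intro c hc
    exact ⟨hAe.trans hc.1, hBe.trans hc.2⟩

theorem stmt_12 {α : Type*} [DecidableEq α] (A B : List α) (m n : ℕ)
    (hA : A.length = m) (hB : B.length = n) (i j : ℕ)
    (him : i ≤ m) (hjn : j ≤ n) (s : List α) (e : List (ℕ × ℕ))
    (he : IsEmbedding A B i j s e) (p q : ℕ)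
    (hlast : e.getLast? = some (p, q)) :
    (∀ j', IsMatch A B p j' → q < j' → j' ≤ j →
      B[j' - 1]? = B[q - 1]? ∧
        IsEmbedding A B i j s (e.dropLast ++ [(p, j')])) ∧
    (∀ i', IsMatch A B i' q → p < i' → i' ≤ i →
      A[i' - 1]? = A[p - 1]? ∧
        IsEmbedding A B i j s (e.dropLast ++ [(i', q)])) := by
  have hne : e ≠ [] := by
    intro h; rw [h] at hlast; simp at hlast
  have hpl : e.getLast hne = (p, q) := by
    rw [List.getLast?_eq_getLast hne] at hlast
    exact Option.some_inj.mp hlast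
  have heq : e.dropLast ++ [(p, q)] = e := by
    rw [← hpl]; exact List.dropLast_append_getLast hne
  rw [← heq] at he
  obtain ⟨c, hcA, hcB⟩ := forall2_last he.2.2
  have hbpq := he.2.1 _ (List.mem_append_right _ (List.mem_singleton.2 rfl))
  constructor
  · intro j' hm hqj' hj'j
    have hB' : B[j' - 1]? = B[q - 1]? := by
      rw [← hm.2.2.2.2, hcA, hcB]
    exact ⟨hB', emb_replace A B i j s e.dropLast p q p j' he le_rfl hqj'.le
      hbpq.2.1 hj'j rfl hB'⟩
  · intro i' hm hpi' hi'i
    have hA' : A[i' - 1]? = A[p - 1]? := by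
      rw [hm.2.2.2.2, hcB, hcA]
    exact ⟨hA', emb_replace A B i j s e.dropLast p q i' q he hpi'.le le_rfl
      hi'i hbpq.2.2.2 hA' rfl⟩
end
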